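/- The q^{-2}-exponential expansion identity: exp_{q^{-2}}((q-q^{-1}) e_1⊗f_2)(v^{(1)}_n ⊗ v^{(2)}_m) = Σ_{k=0}^{n} C(n,k)_{q^{-2}} v^{(1)}_{n-k} ⊗ v^{(2)}_{m+k}, where C(n,k)_{q^{-2}} is the Gaussian binomial coefficient with base q^{-2}. -/

import Mathlib

namespace stmt14

/-- The model of W₁ ⊗ W₂: basis vectors `single (n,m) 1 = v⁽¹⁾ₙ ⊗ v⁽²⁾ₘ`. -/
abbrev V : Type := (ℕ × ℕ) →₀ ℂ

noncomputable def op (g : ℕ × ℕ → V) : V →ₗ[ℂ] V :=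
  Finsupp.lsum ℂ fun p => LinearMap.toSpanSingleton ℂ V (g p)

/-- `e₁ ⊗ 1`: `e₁ v⁽¹⁾ₙ = [n]_q q^{-n+1}/(q-q⁻¹) v⁽¹⁾_{n-1}`. -/
noncomputable def e1 (q : ℂ) : V →ₗ[ℂ] V :=
  op fun p => Finsupp.single (p.1 - 1, p.2)
    (if p.1 = 0 then 0 else
      ((q ^ p.1 - q⁻¹ ^ p.1) / (q - q⁻¹)) * (q⁻¹ ^ p.1 * q) / (q - q⁻¹))

/-- `1 ⊗ f₂`: `f₂ v⁽²⁾ₘ = v⁽²⁾_{m+1}`. -/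
noncomputable def f2 : V →ₗ[ℂ] V :=
  op fun p => Finsupp.single (p.1, p.2 + 1) 1

/-- `(k)_p = (1-p^k)/(1-p)`. -/
noncomputable def pnum (p : ℂ) (k : ℕ) : ℂ := (1 - p ^ k) / (1 - p)

/-- `(k)_p!`. -/
noncomputable def pfact (p : ℂ) (k : ℕ) : ℂ := ∏ i ∈ Finset.range k, pnum p (i + 1)

/-- Gaussian binomial `C(n,k)_p`. -/
noncomputable def pbinom (p : ℂ) (n k : ℕ) : ℂ := pfact p n / (pfact p k * pfact p (n - k))

/-- `O = exp_{q⁻²}((q-q⁻¹)·e₁⊗f₂)`: since `(e₁⊗f₂)^k` kills `v⁽¹⁾ₙ ⊗ v⁽²⁾ₘ` for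
`k > n`, the series truncates on each basis vector. -/
noncomputable def Oop (q : ℂ) : V →ₗ[ℂ] V :=
  op fun p => ∑ k ∈ Finset.range (p.1 + 1),
    (pfact (q⁻¹ ^ 2) k)⁻¹ • ((((q - q⁻¹) • (e1 q ∘ₗ f2)) ^ k) (Finsupp.single p 1))

end stmt14

/-! The operator `(q - q⁻¹) e₁ ⊗ f₂` sends `v⁽¹⁾ₙ ⊗ v⁽²⁾ₘ` to `(n)_{q⁻²} v⁽¹⁾ₙ₋₁ ⊗ v⁽²⁾ₘ₊₁`, so its
`k`-th power has coefficient the falling product `(n)(n-1)⋯(n-k+1)` in base `q⁻²`, which equals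
`(n)! / (n-k)!`. Dividing by `(k)!`, as the exponential does, leaves the Gaussian binomial. -/

namespace stmt14

section QuantumNumbers

variable {p : ℂ}

lemma pfact_sub_mul_prod_range (n : ℕ) {k : ℕ} (hk : k ≤ n) :
    pfact p (n - k) * ∏ i ∈ Finset.range k, pnum p (n - i) = pfact p n := by
  induction k with
  | zero => simp
  | succ k ih =>
    have hsucc : pfact p (n - (k + 1)) * pnum p (n - k) = pfact p (n - k) := by
      rw [show n - k = n - (k + 1) + 1 by omega]
      exact (Finset.prod_range_succ _ _).symm
    rw [Finset.prod_range_succ, ← mul_assoc, mul_right_comm, hsucc, ih (by omega)]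

lemma pnum_ne_zero (hp : ∀ j : ℕ, j ≠ 0 → p ^ j ≠ 1) {j : ℕ} (hj : j ≠ 0) :
    pnum p j ≠ 0 := by
  have hp1 : 1 - p ≠ 0 := sub_ne_zero.mpr fun h => hp 1 one_ne_zero (by simp [← h])
  exact div_ne_zero (sub_ne_zero.mpr (hp j hj).symm) hp1

lemma pfact_ne_zero (hp : ∀ j : ℕ, j ≠ 0 → p ^ j ≠ 1) (k : ℕ) : pfact p k ≠ 0 :=
  Finset.prod_ne_zero_iff.mpr fun i _ => pnum_ne_zero hp (Nat.succ_ne_zero i)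

lemma pbinom_eq_inv_pfact_mul_prod (hp : ∀ j : ℕ, j ≠ 0 → p ^ j ≠ 1) {n k : ℕ} (hk : k ≤ n) :
    pbinom p n k = (pfact p k)⁻¹ * ∏ i ∈ Finset.range k, pnum p (n - i) := by
  rw [pbinom, ← pfact_sub_mul_prod_range n hk, mul_comm (pfact p k),
    mul_div_mul_left _ _ (pfact_ne_zero hp (n - k)), inv_mul_eq_div]

end QuantumNumbers

lemma inv_sq_pow_ne_one {q : ℂ} (hroot : ∀ n : ℕ, n ≠ 0 → q ^ n ≠ 1) (j : ℕ) (hj : j ≠ 0) :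
    (q⁻¹ ^ 2) ^ j ≠ 1 := by
  rw [← pow_mul, inv_pow, inv_ne_one]
  exact hroot (2 * j) (by omega)

lemma sub_inv_ne_zero {q : ℂ} (hq : q ≠ 0) (hq2 : q ^ 2 ≠ 1) : q - q⁻¹ ≠ 0 := by
  rw [sub_ne_zero]
  intro h
  apply hq2
  rw [sq]
  nth_rewrite 2 [h]
  exact mul_inv_cancel₀ hq

lemma sub_inv_mul_e1_coeff {q : ℂ} (hq : q ≠ 0) (hq2 : q ^ 2 ≠ 1) (n : ℕ) :
    (q - q⁻¹) * (if n = 0 then 0 else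
      ((q ^ n - q⁻¹ ^ n) / (q - q⁻¹)) * (q⁻¹ ^ n * q) / (q - q⁻¹)) = pnum (q⁻¹ ^ 2) n := by
  have hd := sub_inv_ne_zero hq hq2
  have hd2 : (1 : ℂ) - q⁻¹ ^ 2 ≠ 0 := by
    rw [sub_ne_zero, ne_comm, inv_pow, inv_ne_one]
    exact hq2
  split_ifs with hn
  · simp [hn, pnum]
  · rw [pnum, eq_div_iff hd2]
    field_simp
    ring_nf
    rw [← mul_pow, mul_inv_cancel₀ hq, one_pow]

lemma op_single (g : ℕ × ℕ → V) (i : ℕ × ℕ) (c : ℂ) :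
    op g (Finsupp.single i c) = c • g i := by
  simp [op]

lemma sub_inv_smul_e1_comp_f2_single {q : ℂ} (hq : q ≠ 0) (hq2 : q ^ 2 ≠ 1) (n m : ℕ) :
    ((q - q⁻¹) • (e1 q ∘ₗ f2)) (Finsupp.single (n, m) 1)
      = pnum (q⁻¹ ^ 2) n • Finsupp.single (n - 1, m + 1) 1 := by
  rw [LinearMap.smul_apply, LinearMap.comp_apply, f2, op_single, one_smul, e1, op_single,
    one_smul, Finsupp.smul_single, Finsupp.smul_single, smul_eq_mul, smul_eq_mul, mul_one,
    sub_inv_mul_e1_coeff hq hq2]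

lemma sub_inv_smul_e1_comp_f2_pow_single {q : ℂ} (hq : q ≠ 0) (hq2 : q ^ 2 ≠ 1) (k n m : ℕ) :
    (((q - q⁻¹) • (e1 q ∘ₗ f2)) ^ k) (Finsupp.single (n, m) 1)
      = (∏ i ∈ Finset.range k, pnum (q⁻¹ ^ 2) (n - i)) • Finsupp.single (n - k, m + k) 1 := by
  induction k generalizing n m with
  | zero => simp
  | succ k ih =>
    have hprod : pnum (q⁻¹ ^ 2) n * ∏ i ∈ Finset.range k, pnum (q⁻¹ ^ 2) (n - 1 - i)
        = ∏ i ∈ Finset.range (k + 1), pnum (q⁻¹ ^ 2) (n - i) := by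
      rw [Finset.prod_range_succ', Nat.sub_zero, mul_comm]
      exact congrArg (· * _) (Finset.prod_congr rfl fun i _ => by congr 1; omega)
    rw [pow_succ, Module.End.mul_apply, sub_inv_smul_e1_comp_f2_single hq hq2, map_smul, ih,
      smul_smul, hprod, show n - 1 - k = n - (k + 1) by omega, add_right_comm, add_assoc]

end stmt14

/-- the q⁻²-exponential expansion identity
`exp_{q⁻²}((q-q⁻¹) e₁⊗f₂)(v⁽¹⁾ₙ ⊗ v⁽²⁾ₘ) = Σ_{k=0}^{n} C(n,k)_{q⁻²} v⁽¹⁾_{n-k} ⊗ v⁽²⁾_{m+k}`. -/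
theorem stmt14 (q : ℂ) (hq : q ≠ 0) (hroot : ∀ n : ℕ, n ≠ 0 → q ^ n ≠ 1) :
    ∀ n m : ℕ,
      stmt14.Oop q (Finsupp.single (n, m) 1)
        = ∑ k ∈ Finset.range (n + 1),
            stmt14.pbinom (q⁻¹ ^ 2) n k • Finsupp.single (n - k, m + k) (1 : ℂ) := by
  open stmt14 in
  intro n m
  rw [Oop, op_single, one_smul]
  refine Finset.sum_congr rfl fun k hk => ?_
  have hkn : k ≤ n := Nat.lt_succ_iff.mp (Finset.mem_range.mp hk)
  rw [sub_inv_smul_e1_comp_f2_pow_single hq (hroot 2 two_ne_zero), smul_smul,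
    pbinom_eq_inv_pfact_mul_prod (inv_sq_pow_ne_one hroot) hkn]
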